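/- For the one-layer softmax classifier with targeted cross-entropy loss L(x, e_t) = -log(softmax(Wx)_t), suppose grad_x L(x, e_t) has no zero components. If 0 < epsilon < min_i (1/||W||_infinity) * log(1 + |sum_j exp((Wx)_j) w_{ji} - w_{ti} sum_j exp((Wx)_j)| / (sum_j |w_{ji} - w_{ti}| exp((Wx)_j))), then the targeted FGSM iterate x' = x - epsilon * sign(grad_x L(x, e_t)) satisfies L(x', e_t) <= L(x, e_t). -/

import Mathlib

noncomputable def softmax {k : ℕ} (z : Fin k → ℝ) (i : Fin k) : ℝ :=
  Real.exp (z i) / ∑ j, Real.exp (z j)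

lemma abs_sign_le_one' (y : ℝ) : |Real.sign y| ≤ 1 := by
  rcases lt_trichotomy y 0 with h | h | h
  · rw [Real.sign_of_neg h]; norm_num
  · rw [h, Real.sign_zero]; norm_num
  · rw [Real.sign_of_pos h]; norm_num

lemma chord_bound' (ε M r : ℝ) (hM : 0 < M) (hb : |r| ≤ 2*M) :
    4*M*(Real.exp (-(ε*r)) - 1) ≤
      ((Real.exp (ε*M))^2 - 1 - (1 - ((Real.exp (ε*M))^2)⁻¹)) * |r|
      - ((Real.exp (ε*M))^2 - 1 + (1 - ((Real.exp (ε*M))^2)⁻¹)) * r := by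
  have hM2 : (2:ℝ)*M ≠ 0 := by positivity
  have hu : Real.exp (2*(ε*M)) = (Real.exp (ε*M))^2 := by
    rw [two_mul, Real.exp_add, sq]
  have hv : Real.exp (-(2*(ε*M))) = ((Real.exp (ε*M))^2)⁻¹ := by
    rw [Real.exp_neg, hu]
  rcases le_total 0 r with hb0 | hb0
  · have hble : r ≤ 2*M := by rwa [abs_of_nonneg hb0] at hb
    have hθ0 : 0 ≤ r/(2*M) := div_nonneg hb0 (by linarith)
    have hθ1 : r/(2*M) ≤ 1 := by rw [div_le_one (by linarith)]; exact hble
    have hθ1' : (0:ℝ) ≤ 1 - r/(2*M) := by linarith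
    have hsum : r/(2*M) + (1 - r/(2*M)) = 1 := by ring
    have hconv := convexOn_exp.2 (Set.mem_univ (-(2*(ε*M)))) (Set.mem_univ (0:ℝ))
      hθ0 hθ1' hsum
    simp only [smul_eq_mul, mul_zero, add_zero, Real.exp_zero, mul_one] at hconv
    have harg : r/(2*M) * (-(2*(ε*M))) = -(ε*r) := by field_simp
    rw [harg, hv] at hconv
    have hmul := mul_le_mul_of_nonneg_left (sub_le_sub_right hconv 1)
      (by linarith : (0:ℝ) ≤ 4*M)
    have h2 : 4*M*((r/(2*M)) * ((Real.exp (ε*M))^2)⁻¹ + (1 - r/(2*M)) - 1)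
        = 2*r*(((Real.exp (ε*M))^2)⁻¹ - 1) := by field_simp; ring
    rw [abs_of_nonneg hb0]
    have h3 : ((Real.exp (ε*M))^2 - 1 - (1 - ((Real.exp (ε*M))^2)⁻¹)) * r
      - ((Real.exp (ε*M))^2 - 1 + (1 - ((Real.exp (ε*M))^2)⁻¹)) * r
      = 2*r*(((Real.exp (ε*M))^2)⁻¹ - 1) := by ring
    linarith
  · have hble : -r ≤ 2*M := by rw [abs_of_nonpos hb0] at hb; exact hb
    have hθ0 : 0 ≤ -r/(2*M) := div_nonneg (by linarith) (by linarith)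
    have hθ1 : -r/(2*M) ≤ 1 := by rw [div_le_one (by linarith)]; exact hble
    have hθ1' : (0:ℝ) ≤ 1 - -r/(2*M) := by linarith
    have hsum : -r/(2*M) + (1 - -r/(2*M)) = 1 := by ring
    have hconv := convexOn_exp.2 (Set.mem_univ (2*(ε*M))) (Set.mem_univ (0:ℝ))
      hθ0 hθ1' hsum
    simp only [smul_eq_mul, mul_zero, add_zero, Real.exp_zero, mul_one] at hconv
    have harg : -r/(2*M) * (2*(ε*M)) = -(ε*r) := by field_simp
    rw [harg, hu] at hconv
    have hmul := mul_le_mul_of_nonneg_left (sub_le_sub_right hconv 1)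
      (by linarith : (0:ℝ) ≤ 4*M)
    have h2 : 4*M*((-r/(2*M)) * (Real.exp (ε*M))^2 + (1 - -r/(2*M)) - 1)
        = -2*r*((Real.exp (ε*M))^2 - 1) := by field_simp; ring
    rw [abs_of_nonpos hb0]
    have h3 : ((Real.exp (ε*M))^2 - 1 - (1 - ((Real.exp (ε*M))^2)⁻¹)) * (-r)
      - ((Real.exp (ε*M))^2 - 1 + (1 - ((Real.exp (ε*M))^2)⁻¹)) * r
      = -2*r*((Real.exp (ε*M))^2 - 1) := by ring
    linarith


lemma core_sum' (k n : ℕ) [NeZero k] [NeZero n]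
    (E : Fin k → ℝ) (hE : ∀ j, 0 < E j)
    (A : Fin k → Fin n → ℝ)
    (s : Fin n → ℝ) (hs : ∀ i, |s i| ≤ 1)
    (hsS : ∀ i, s i * (∑ j, E j * A j i) = |∑ j, E j * A j i|)
    (M : ℝ) (hM : 0 < M)
    (hA : ∀ j, (∑ i, |A j i|) ≤ 2*M)
    (ε : ℝ) (hε0 : 0 ≤ ε)
    (hεi : ∀ i, (∑ j, |A j i| * E j) * (Real.exp (ε*M) - 1) ≤ |∑ j, E j * A j i|) :
    ∑ j, E j * Real.exp (-(ε * ∑ i, A j i * s i)) ≤ ∑ j, E j := by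
  set t := Real.exp (ε*M) with htdef
  have ht1 : 1 ≤ t := Real.one_le_exp (mul_nonneg hε0 hM.le)
  have htpos : (0:ℝ) < t := lt_of_lt_of_le one_pos ht1
  set w := (t^2)⁻¹ with hwdef
  have hw : t^2 * w = 1 := mul_inv_cancel₀ (by positivity)
  set b : Fin k → ℝ := fun j => ∑ i, A j i * s i with hbdef
  -- P : sum of E_j * b_j equals sum of |S_i|
  have hP : ∑ j, E j * b j = ∑ i, |∑ j, E j * A j i| := by
    calc ∑ j, E j * b j = ∑ j, ∑ i, E j * (A j i * s i) := by
          simp [hbdef, Finset.mul_sum]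
      _ = ∑ i, ∑ j, E j * (A j i * s i) := Finset.sum_comm
      _ = ∑ i, s i * (∑ j, E j * A j i) := by
          refine Finset.sum_congr rfl fun i _ => ?_
          rw [Finset.mul_sum]
          exact Finset.sum_congr rfl fun j _ => by ring
      _ = ∑ i, |∑ j, E j * A j i| := Finset.sum_congr rfl fun i _ => hsS i
  -- bound on |b j|
  have hbb : ∀ j, |b j| ≤ 2*M := by
    intro j
    calc |b j| ≤ ∑ i, |A j i * s i| := Finset.abs_sum_le_sum_abs _ _
      _ ≤ ∑ i, |A j i| := Finset.sum_le_sum fun i _ => by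
          rw [abs_mul]
          calc |A j i| * |s i| ≤ |A j i| * 1 :=
                mul_le_mul_of_nonneg_left (hs i) (abs_nonneg _)
            _ = |A j i| := mul_one _
      _ ≤ 2*M := hA j
  -- Q ≤ TT
  have hQ : ∑ j, E j * |b j| ≤ ∑ i, ∑ j, |A j i| * E j := by
    calc ∑ j, E j * |b j| ≤ ∑ j, E j * ∑ i, |A j i| := by
          refine Finset.sum_le_sum fun j _ => ?_
          refine mul_le_mul_of_nonneg_left ?_ (hE j).le
          calc |b j| ≤ ∑ i, |A j i * s i| := Finset.abs_sum_le_sum_abs _ _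
            _ ≤ ∑ i, |A j i| := Finset.sum_le_sum fun i _ => by
                rw [abs_mul]
                calc |A j i| * |s i| ≤ |A j i| * 1 :=
                      mul_le_mul_of_nonneg_left (hs i) (abs_nonneg _)
                  _ = |A j i| := mul_one _
      _ = ∑ j, ∑ i, E j * |A j i| := by
          refine Finset.sum_congr rfl fun j _ => ?_; rw [Finset.mul_sum]
      _ = ∑ i, ∑ j, E j * |A j i| := Finset.sum_comm
      _ = ∑ i, ∑ j, |A j i| * E j := by
          refine Finset.sum_congr rfl fun i _ => Finset.sum_congr rfl fun j _ => mul_comm _ _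
  -- (t-1) * TT ≤ P
  have hTT : (t - 1) * (∑ i, ∑ j, |A j i| * E j) ≤ ∑ i, |∑ j, E j * A j i| := by
    rw [Finset.mul_sum]
    refine Finset.sum_le_sum fun i _ => ?_
    calc (t-1) * ∑ j, |A j i| * E j = (∑ j, |A j i| * E j) * (t - 1) := mul_comm _ _
      _ ≤ |∑ j, E j * A j i| := hεi i
  have hQ0 : (0:ℝ) ≤ ∑ j, E j * |b j| :=
    Finset.sum_nonneg fun j _ => mul_nonneg (hE j).le (abs_nonneg _)
  -- combine via chord bound
  have hsum : ∑ j, E j * (4*M*(Real.exp (-(ε * b j)) - 1)) ≤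
      ∑ j, E j * ((t^2 - 1 - (1 - w)) * |b j| - (t^2 - 1 + (1 - w)) * b j) :=
    Finset.sum_le_sum fun j _ =>
      mul_le_mul_of_nonneg_left (chord_bound' ε M (b j) hM (hbb j)) (hE j).le
  have hL : ∑ j, E j * (4*M*(Real.exp (-(ε * b j)) - 1))
      = 4*M * (∑ j, E j * Real.exp (-(ε * b j)) - ∑ j, E j) := by
    rw [mul_sub, Finset.mul_sum, Finset.mul_sum, ← Finset.sum_sub_distrib]
    exact Finset.sum_congr rfl fun j _ => by ring
  have hR : ∑ j, E j * ((t^2 - 1 - (1 - w)) * |b j| - (t^2 - 1 + (1 - w)) * b j)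
      = (t^2 - 1 - (1 - w)) * (∑ j, E j * |b j|) - (t^2 - 1 + (1 - w)) * (∑ j, E j * b j) := by
    rw [Finset.mul_sum, Finset.mul_sum, ← Finset.sum_sub_distrib]
    exact Finset.sum_congr rfl fun j _ => by ring
  -- RHS is nonpositive
  have hwle : w ≤ 1 := by
    rw [hwdef]
    rw [inv_le_one_iff₀]
    right; nlinarith
  have hd0 : (0:ℝ) ≤ t^2 - 1 + (1 - w) := by nlinarith
  have hcd : t^2 - 1 - (1 - w) ≤ (t^2 - 1 + (1 - w)) * (t - 1) := by
    nlinarith [hw, ht1, sq_nonneg (t-1), mul_nonneg (mul_nonneg (sub_nonneg.2 ht1) (sub_nonneg.2 ht1)) (sub_nonneg.2 ht1), htpos]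
  have hPQ : (t - 1) * (∑ j, E j * |b j|) ≤ ∑ j, E j * b j := by
    rw [hP]
    calc (t-1) * (∑ j, E j * |b j|) ≤ (t-1) * (∑ i, ∑ j, |A j i| * E j) :=
          mul_le_mul_of_nonneg_left hQ (by linarith)
      _ ≤ ∑ i, |∑ j, E j * A j i| := hTT
  have hRle : (t^2 - 1 - (1 - w)) * (∑ j, E j * |b j|) - (t^2 - 1 + (1 - w)) * (∑ j, E j * b j) ≤ 0 := by
    have h1 : (t^2 - 1 - (1 - w)) * (∑ j, E j * |b j|) ≤
        ((t^2 - 1 + (1 - w)) * (t - 1)) * (∑ j, E j * |b j|) :=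
      mul_le_mul_of_nonneg_right hcd hQ0
    have h2 : (t^2 - 1 + (1 - w)) * ((t - 1) * (∑ j, E j * |b j|)) ≤
        (t^2 - 1 + (1 - w)) * (∑ j, E j * b j) :=
      mul_le_mul_of_nonneg_left hPQ hd0
    nlinarith [h1, h2]
  have hfinal : 4*M * (∑ j, E j * Real.exp (-(ε * b j)) - ∑ j, E j) ≤ 0 := by
    rw [← hL]; calc _ ≤ _ := hsum
      _ ≤ 0 := by rw [hR]; exact hRle
  nlinarith [hfinal, hM]


/-- Targeted FGSM decreases the targeted cross-entropy loss
`L(x, e_t) = -log(softmax(Wx)_t)` for the one-layer softmax classifier,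
provided the gradient has no zero components and `ε` is below the stated
bound. -/
theorem targeted_fgsm_one_layer_loss_decrease (k n : ℕ) [NeZero k] [NeZero n]
    (W : Matrix (Fin k) (Fin n) ℝ) (x : Fin n → ℝ) (t : Fin k)
    (L : (Fin n → ℝ) → ℝ)
    (hL : ∀ z, L z = -Real.log (softmax (W.mulVec z) t))
    (g : Fin n → ℝ)
    (hg : ∀ i, g i = ∑ j, softmax (W.mulVec x) j * W j i - W t i)
    (hgnz : ∀ i, g i ≠ 0)
    (ε : ℝ) (hε0 : 0 < ε)
    (hε : ε < Finset.univ.inf' Finset.univ_nonempty (fun i =>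
      (1 / Finset.univ.sup' Finset.univ_nonempty (fun i' => ∑ m, |W i' m|)) *
        Real.log (1 +
          |∑ j, Real.exp (W.mulVec x j) * W j i -
              W t i * ∑ j, Real.exp (W.mulVec x j)| /
            ∑ j, |W j i - W t i| * Real.exp (W.mulVec x j))))
    (x' : Fin n → ℝ)
    (hx' : ∀ i, x' i = x i - ε * Real.sign (g i)) :
    L x' ≤ L x := by
  classical
  -- abbreviations (local notation via haves)
  have hEpos : ∀ j, (0:ℝ) < Real.exp (W.mulVec x j) := fun j => Real.exp_pos _
  have hDpos : (0:ℝ) < ∑ j, Real.exp (W.mulVec x j) :=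
    Finset.sum_pos (fun j _ => hEpos j) Finset.univ_nonempty
  -- g in terms of S
  have hgS : ∀ i, g i =
      (∑ j, Real.exp (W.mulVec x j) * (W j i - W t i)) / (∑ j, Real.exp (W.mulVec x j)) := by
    intro i
    rw [hg]
    have h1 : ∀ j : Fin k, softmax (W.mulVec x) j * W j i
        = (Real.exp (W.mulVec x j) * W j i) / (∑ j, Real.exp (W.mulVec x j)) := by
      intro j; simp only [softmax]; ring
    rw [Finset.sum_congr rfl (fun j _ => h1 j), ← Finset.sum_div]
    rw [eq_div_iff hDpos.ne']
    rw [sub_mul, div_mul_cancel₀ _ hDpos.ne']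
    rw [mul_comm (W t i), Finset.sum_mul, ← Finset.sum_sub_distrib]
    exact Finset.sum_congr rfl fun j _ => by ring
  -- S_i is nonzero, sign relation
  have hSne : ∀ i, (∑ j, Real.exp (W.mulVec x j) * (W j i - W t i)) ≠ 0 := by
    intro i h0
    exact hgnz i (by rw [hgS i, h0, zero_div])
  have hsS : ∀ i, Real.sign (g i) * (∑ j, Real.exp (W.mulVec x j) * (W j i - W t i))
      = |∑ j, Real.exp (W.mulVec x j) * (W j i - W t i)| := by
    intro i
    rcases lt_or_gt_of_ne (hSne i) with h | h
    · have hgneg : g i < 0 := by rw [hgS i]; exact div_neg_of_neg_of_pos h hDpos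
      rw [Real.sign_of_neg hgneg, abs_of_neg h]; ring
    · have hgpos : 0 < g i := by rw [hgS i]; exact div_pos h hDpos
      rw [Real.sign_of_pos hgpos, abs_of_pos h]
      ring
  -- T_i positive
  have habsST : ∀ i, |∑ j, Real.exp (W.mulVec x j) * (W j i - W t i)|
      ≤ ∑ j, |W j i - W t i| * Real.exp (W.mulVec x j) := by
    intro i
    calc |∑ j, Real.exp (W.mulVec x j) * (W j i - W t i)|
        ≤ ∑ j, |Real.exp (W.mulVec x j) * (W j i - W t i)| := Finset.abs_sum_le_sum_abs _ _
      _ = ∑ j, |W j i - W t i| * Real.exp (W.mulVec x j) := by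
          refine Finset.sum_congr rfl fun j _ => ?_
          rw [abs_mul, abs_of_pos (hEpos j), mul_comm]
  have hTpos : ∀ i, (0:ℝ) < ∑ j, |W j i - W t i| * Real.exp (W.mulVec x j) := by
    intro i
    exact lt_of_lt_of_le (abs_pos.mpr (hSne i)) (habsST i)
  -- rewrite the S in hε to our form
  have hSraw : ∀ i, (∑ j, Real.exp (W.mulVec x j) * W j i)
      - W t i * (∑ j, Real.exp (W.mulVec x j))
      = ∑ j, Real.exp (W.mulVec x j) * (W j i - W t i) := by
    intro i
    rw [Finset.mul_sum, ← Finset.sum_sub_distrib]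
    exact Finset.sum_congr rfl fun j _ => by ring
  have h5 : ∀ i : Fin n, ε <
      (1 / Finset.univ.sup' Finset.univ_nonempty (fun i' => ∑ m, |W i' m|)) *
        Real.log (1 + |∑ j, Real.exp (W.mulVec x j) * (W j i - W t i)| /
          ∑ j, |W j i - W t i| * Real.exp (W.mulVec x j)) := by
    intro i
    have h := lt_of_lt_of_le hε (Finset.inf'_le _ (Finset.mem_univ i))
    rwa [hSraw i] at h
  have hlogpos : ∀ i, 0 < Real.log (1 + |∑ j, Real.exp (W.mulVec x j) * (W j i - W t i)| /
      ∑ j, |W j i - W t i| * Real.exp (W.mulVec x j)) := by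
    intro i
    apply Real.log_pos
    have : 0 < |∑ j, Real.exp (W.mulVec x j) * (W j i - W t i)| /
        ∑ j, |W j i - W t i| * Real.exp (W.mulVec x j) :=
      div_pos (abs_pos.mpr (hSne i)) (hTpos i)
    linarith
  -- M positive
  have hMpos : (0:ℝ) < Finset.univ.sup' Finset.univ_nonempty (fun i' => ∑ m, |W i' m|) := by
    by_contra hM0
    push_neg at hM0
    obtain ⟨i0, -⟩ := Finset.univ_nonempty (α := Fin n)
    have h1 := h5 i0
    have h2 : 1 / Finset.univ.sup' Finset.univ_nonempty (fun i' => ∑ m, |W i' m|) ≤ 0 :=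
      one_div_nonpos.mpr hM0
    nlinarith [hlogpos i0]
  -- per-coordinate epsilon bound
  have hεi : ∀ i, (∑ j, |W j i - W t i| * Real.exp (W.mulVec x j)) *
      (Real.exp (ε * Finset.univ.sup' Finset.univ_nonempty (fun i' => ∑ m, |W i' m|)) - 1)
      ≤ |∑ j, Real.exp (W.mulVec x j) * (W j i - W t i)| := by
    intro i
    have h1 := h5 i
    rw [one_div_mul_eq_div] at h1
    have h2 := (lt_div_iff₀ hMpos).mp h1
    have h3 := Real.exp_lt_exp.mpr h2
    rw [Real.exp_log (by positivity)] at h3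
    have h4 : Real.exp (ε * Finset.univ.sup' Finset.univ_nonempty (fun i' => ∑ m, |W i' m|)) - 1
        < |∑ j, Real.exp (W.mulVec x j) * (W j i - W t i)| /
          ∑ j, |W j i - W t i| * Real.exp (W.mulVec x j) := by linarith
    have h6 := (lt_div_iff₀ (hTpos i)).mp h4
    linarith [h6]
  -- row bound
  have hrow : ∀ j : Fin k, (∑ i, |W j i - W t i|)
      ≤ 2 * Finset.univ.sup' Finset.univ_nonempty (fun i' => ∑ m, |W i' m|) := by
    intro j
    calc ∑ i, |W j i - W t i| ≤ ∑ i, (|W j i| + |W t i|) := by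
          refine Finset.sum_le_sum fun i _ => ?_
          calc |W j i - W t i| = |W j i + -(W t i)| := by rw [sub_eq_add_neg]
            _ ≤ |W j i| + |-(W t i)| := abs_add_le _ _
            _ = |W j i| + |W t i| := by rw [abs_neg]
      _ = (∑ i, |W j i|) + ∑ i, |W t i| := Finset.sum_add_distrib
      _ ≤ _ := by
          have hj := Finset.le_sup' (fun i' => ∑ m, |W i' m|) (Finset.mem_univ j)
          have ht := Finset.le_sup' (fun i' => ∑ m, |W i' m|) (Finset.mem_univ t)
          linarith
  -- core inequality
  have hcore := core_sum' k n (fun j => Real.exp (W.mulVec x j)) hEpos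
    (fun j i => W j i - W t i) (fun i => Real.sign (g i)) (fun i => abs_sign_le_one' _)
    hsS _ hMpos hrow ε hε0.le hεi
  -- x' image
  have hmv : ∀ (v : Fin n → ℝ) (j : Fin k), W.mulVec v j = ∑ i, W j i * v i := fun v j => rfl
  have hx'mv : ∀ j, W.mulVec x' j = W.mulVec x j - ε * ∑ i, W j i * Real.sign (g i) := by
    intro j
    rw [hmv x', hmv x, Finset.mul_sum, ← Finset.sum_sub_distrib]
    refine Finset.sum_congr rfl fun i _ => ?_
    rw [hx' i]; ring
  have hβ : ∀ j, ∑ i, (W j i - W t i) * Real.sign (g i)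
      = (∑ i, W j i * Real.sign (g i)) - ∑ i, W t i * Real.sign (g i) := by
    intro j
    rw [← Finset.sum_sub_distrib]
    exact Finset.sum_congr rfl fun i _ => by ring
  have hdiff : ∀ j, W.mulVec x' j - W.mulVec x' t
      = (W.mulVec x j - W.mulVec x t) - ε * ∑ i, (W j i - W t i) * Real.sign (g i) := by
    intro j
    rw [hx'mv j, hx'mv t, hβ j]; ring
  -- sum comparison
  have hsum' : ∑ j, Real.exp (W.mulVec x' j - W.mulVec x' t)
      ≤ ∑ j, Real.exp (W.mulVec x j - W.mulVec x t) := by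
    calc ∑ j, Real.exp (W.mulVec x' j - W.mulVec x' t)
        = ∑ j, (Real.exp (W.mulVec x j) *
            Real.exp (-(ε * ∑ i, (W j i - W t i) * Real.sign (g i)))) *
            Real.exp (-(W.mulVec x t)) := by
          refine Finset.sum_congr rfl fun j _ => ?_
          rw [hdiff j, ← Real.exp_add, ← Real.exp_add]
          congr 1; ring
      _ = (∑ j, Real.exp (W.mulVec x j) *
            Real.exp (-(ε * ∑ i, (W j i - W t i) * Real.sign (g i)))) *
            Real.exp (-(W.mulVec x t)) := by rw [Finset.sum_mul]
      _ ≤ (∑ j, Real.exp (W.mulVec x j)) * Real.exp (-(W.mulVec x t)) :=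
          mul_le_mul_of_nonneg_right hcore (Real.exp_pos _).le
      _ = ∑ j, Real.exp (W.mulVec x j - W.mulVec x t) := by
          rw [Finset.sum_mul]
          refine Finset.sum_congr rfl fun j _ => ?_
          rw [← Real.exp_add, sub_eq_add_neg]
  -- rewrite L
  have hLform : ∀ y, L y = Real.log (∑ j, Real.exp (W.mulVec y j - W.mulVec y t)) := by
    intro y
    rw [hL]
    have hDy : (0:ℝ) < ∑ j, Real.exp (W.mulVec y j) :=
      Finset.sum_pos (fun _ _ => Real.exp_pos _) Finset.univ_nonempty
    have h1 : ∑ j, Real.exp (W.mulVec y j - W.mulVec y t)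
        = (∑ j, Real.exp (W.mulVec y j)) / Real.exp (W.mulVec y t) := by
      rw [Finset.sum_div]
      exact Finset.sum_congr rfl fun j _ => Real.exp_sub _ _
    rw [h1, Real.log_div hDy.ne' (Real.exp_ne_zero _), Real.log_exp]
    simp only [softmax]
    rw [Real.log_div (Real.exp_ne_zero _) hDy.ne', Real.log_exp]
    ring
  rw [hLform x', hLform x]
  have hpos' : (0:ℝ) < ∑ j, Real.exp (W.mulVec x' j - W.mulVec x' t) :=
    Finset.sum_pos (fun _ _ => Real.exp_pos _) Finset.univ_nonempty
  exact Real.log_le_log hpos' hsum'
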